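/- arXiv:2003.02524 — 2 statements merged into one kernel-verified Lean document; each statement's English description precedes it below -/
import Mathlib

section
/- Every counting function in the class #RHΠ1 belongs to the class ΣQSO(Σ2-2SAT), i.e. #RHΠ1 ⊆ ΣQSO(Σ2-2SAT). -/
/-! ## Finite ordered relational structures and first-order logic -/

/-- A finite relational vocabulary: `card` relation symbols with given arities. -/
structure Vocab where
  card : ℕ
  ar : Fin card → ℕ

/-- A finite ordered `σ`-structure with universe `Fin (n+1)` (the order is the
natural order on `Fin (n+1)`); relations are given as boolean tables. -/
structure StrucOn (σ : Vocab) (n : ℕ) where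
  rel : ∀ i : Fin σ.card, (Fin (σ.ar i) → Fin (n + 1)) → Bool

/-- First-order formulae over `σ` (variables are named by natural numbers). -/
inductive FO (σ : Vocab) : Type
  | eq : ℕ → ℕ → FO σ
  | rel (i : Fin σ.card) (args : Fin (σ.ar i) → ℕ) : FO σ
  | not : FO σ → FO σ
  | or : FO σ → FO σ → FO σ
  | ex : ℕ → FO σ → FO σ
  | top : FO σ
  | bot : FO σ

/-- Satisfaction of a first-order formula in `A` under the first-order assignment `v`. -/
def FO.Sat {σ : Vocab} {n : ℕ} (A : StrucOn σ n) (v : ℕ → Fin (n + 1)) : FO σ → Prop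
  | .eq x y => v x = v y
  | .rel i args => A.rel i (fun j => v (args j)) = true
  | .not φ => ¬ FO.Sat A v φ
  | .or φ ψ => FO.Sat A v φ ∨ FO.Sat A v ψ
  | .ex x φ => ∃ a : Fin (n + 1), FO.Sat A (Function.update v x a) φ
  | .top => True
  | .bot => False

/-- A formula is quantifier-free. -/
def FO.QFree {σ : Vocab} : FO σ → Prop
  | .eq _ _ => True
  | .rel _ _ => True
  | .not φ => FO.QFree φ
  | .or φ ψ => FO.QFree φ ∧ FO.QFree ψ
  | .ex _ _ => False
  | .top => True
  | .bot => True

/-- A second-order assignment: to each second-order variable name and each arity `k`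
it assigns a `k`-ary relation on the universe. -/
def SOAssign (n : ℕ) : Type := ℕ → ∀ k : ℕ, ((Fin k → Fin (n + 1)) → Prop)

/-- Update a second-order assignment at the variable `X` of arity `k`. -/
def updSO {n : ℕ} (V : SOAssign n) (X k : ℕ) (B : (Fin k → Fin (n + 1)) → Prop) :
    SOAssign n := fun Y k' =>
  if h : Y = X ∧ k' = k then fun t => B (fun j => t (Fin.cast h.2.symm j)) else V Y k'

/-! ## The quantitative logic ΣQSO(Σ₂-2SAT) -/

/-- An atom of a 2SAT clause: a (positive or negative) second-order literal
`X(x⃗)` / `¬X(x⃗)`, or an arbitrary first-order formula. -/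
inductive Atom (σ : Vocab) : Type
  | lit (pos : Bool) (X : ℕ) (k : ℕ) (args : Fin k → ℕ) : Atom σ
  | fo (φ : FO σ) : Atom σ

/-- The atom is a first-order formula. -/
def Atom.IsFO {σ : Vocab} : Atom σ → Prop
  | .fo _ => True
  | .lit _ _ _ _ => False

/-- Satisfaction of an atom. -/
def Atom.Sat {σ : Vocab} {n : ℕ} (A : StrucOn σ n) (v : ℕ → Fin (n + 1)) (V : SOAssign n) :
    Atom σ → Prop
  | .lit pos X k args =>
      if pos then V X k (fun j => v (args j)) else ¬ V X k (fun j => v (args j))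
  | .fo φ => FO.Sat A v φ

/-- A 2SAT clause `φ₁ ∨ φ₂ ∨ φ₃`: each `φᵢ` is a second-order literal or a
first-order formula, and at least one of them is a first-order formula. -/
structure Clause2 (σ : Vocab) where
  a1 : Atom σ
  a2 : Atom σ
  a3 : Atom σ
  hasFO : a1.IsFO ∨ a2.IsFO ∨ a3.IsFO

/-- Satisfaction of a 2SAT clause. -/
def Clause2.Sat {σ : Vocab} {n : ℕ} (A : StrucOn σ n) (v : ℕ → Fin (n + 1)) (V : SOAssign n)
    (c : Clause2 σ) : Prop :=
  c.a1.Sat A v V ∨ c.a2.Sat A v V ∨ c.a3.Sat A v V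

/-- A Σ₂-2SAT formula `∃x⃗ ∀y⃗ ⋀ⱼ Cⱼ(x⃗,y⃗)` where the `Cⱼ` are 2SAT clauses. -/
structure Sigma2TwoSat (σ : Vocab) where
  exVars : List ℕ
  allVars : List ℕ
  clauses : List (Clause2 σ)

/-- Satisfaction of a Σ₂-2SAT formula in `A` under assignments `v`, `V`. -/
def Sigma2TwoSat.Sat {σ : Vocab} {n : ℕ} (A : StrucOn σ n) (v : ℕ → Fin (n + 1))
    (V : SOAssign n) (ψ : Sigma2TwoSat σ) : Prop :=
  ∃ w : ℕ → Fin (n + 1), (∀ z, z ∉ ψ.exVars → w z = v z) ∧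
    ∀ u : ℕ → Fin (n + 1), (∀ z, z ∉ ψ.allVars → u z = w z) →
      ∀ c ∈ ψ.clauses, Clause2.Sat A u V c

/-- Quantitative second-order formulae of `ΣQSO(Σ₂-2SAT)`: Σ₂-2SAT formulae,
natural-number constants, addition, and first- and second-order quantitative sums. -/
inductive QSO (σ : Vocab) : Type
  | form (ψ : Sigma2TwoSat σ) : QSO σ
  | const (s : ℕ) : QSO σ
  | add (α β : QSO σ) : QSO σ
  | sumFO (x : ℕ) (α : QSO σ) : QSO σ
  | sumSO (X : ℕ) (k : ℕ) (α : QSO σ) : QSO σ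

open Classical in
/-- The evaluation `[[α]](A, v, V)` of a `ΣQSO(Σ₂-2SAT)` formula (Table 1). -/
noncomputable def QSO.eval {σ : Vocab} {n : ℕ} (A : StrucOn σ n) :
    QSO σ → (ℕ → Fin (n + 1)) → SOAssign n → ℕ
  | .form ψ, v, V => if ψ.Sat A v V then 1 else 0
  | .const s, _, _ => s
  | .add α β, v, V => QSO.eval A α v V + QSO.eval A β v V
  | .sumFO x α, v, V => ∑ a : Fin (n + 1), QSO.eval A α (Function.update v x a) V
  | .sumSO X k α, v, V =>
      ∑ B : Finset (Fin k → Fin (n + 1)), QSO.eval A α v (updSO V X k (fun t => t ∈ B))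

/-- The value `[[α]](A)` of a `ΣQSO(Σ₂-2SAT)` formula on the structure `A`
(free variables get default values; for sentences the choice is irrelevant). -/
noncomputable def qsoVal {σ : Vocab} {n : ℕ} (α : QSO σ) (A : StrucOn σ n) : ℕ :=
  QSO.eval A α (fun _ => 0) (fun _ _ _ => False)

/-! ## The class #RHΠ₁ -/

/-- A second-order literal `X(x⃗)` (a second-order variable applied to a tuple of
first-order variables). -/
structure SLit where
  X : ℕ
  k : ℕ
  args : Fin k → ℕ

/-- A clause of a restricted-Horn CNF: at most one unnegated occurrence of a
second-order variable, at most one negated occurrence of a second-order variable,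
and a quantifier-free first-order part. -/
structure RHClause (σ : Vocab) where
  pos : Option SLit
  neg : Option SLit
  fo : FO σ
  qfree : fo.QFree

/-- Satisfaction of a restricted-Horn clause. -/
def RHClause.Sat {σ : Vocab} {n : ℕ} (A : StrucOn σ n) (v : ℕ → Fin (n + 1))
    (V : SOAssign n) (c : RHClause σ) : Prop :=
  (match c.pos with
    | some l => V l.X l.k (fun j => v (l.args j))
    | none => False) ∨
  (match c.neg with
    | some l => ¬ V l.X l.k (fun j => v (l.args j))
    | none => False) ∨
  FO.Sat A v c.fo

/-- The class `#RHΠ₁`: `F` is expressible as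
`F(A) = |{⟨X⃗,x⃗⟩ : A ⊨ ∀y⃗ ψ(y⃗,x⃗,X⃗)}|` for a restricted-Horn CNF `ψ`.
The counted pairs consist of a second-order assignment supported on the listed
second-order variables `Xs` (with arities) together with a first-order assignment
supported on `xs`. -/
def RHPi1 {σ : Vocab} (F : ∀ n : ℕ, StrucOn σ n → ℕ) : Prop :=
  ∃ (Xs : List (ℕ × ℕ)) (xs ys : List ℕ) (ψ : List (RHClause σ)),
    ∀ (n : ℕ) (A : StrucOn σ n),
      F n A = Set.ncard { p : SOAssign n × (ℕ → Fin (n + 1)) |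
        (∀ Y k, (Y, k) ∉ Xs → ∀ t, ¬ p.1 Y k t) ∧
        (∀ z, z ∉ xs → p.2 z = 0) ∧
        ∀ u : ℕ → Fin (n + 1), (∀ z, z ∉ ys → u z = p.2 z) →
          ∀ c ∈ ψ, RHClause.Sat A u p.1 c }

/-!
A restricted-Horn clause `X(x⃗) ∨ ¬Y(y⃗) ∨ φ` is already a 2SAT clause once a missing literal
is replaced by the first-order atom `⊥`, so `∀y⃗ ψ` is a Σ₂-2SAT formula with an empty
existential block. The count of pairs `⟨X⃗, x⃗⟩` is then the value of `Σ X⃗ Σ x⃗ ∀y⃗ ψ`: for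
pairwise distinct variables, summing over one variable at a time enumerates every assignment
that differs from the default one only on those variables exactly once.
-/

section Translation

variable {σ : Vocab}

def litAtom (b : Bool) : Option SLit → Atom σ
  | some l => .lit b l.X l.k l.args
  | none => .fo .bot

def RHClause.toClause2 (c : RHClause σ) : Clause2 σ where
  a1 := litAtom true c.pos
  a2 := litAtom false c.neg
  a3 := .fo c.fo
  hasFO := Or.inr (Or.inr trivial)

theorem RHClause.sat_toClause2 {n : ℕ} (A : StrucOn σ n) (u : ℕ → Fin (n + 1))
    (V : SOAssign n) (c : RHClause σ) : Clause2.Sat A u V c.toClause2 ↔ c.Sat A u V := by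
  rcases c with ⟨_ | _, _ | _, φ, _⟩ <;>
    simp [Clause2.Sat, RHClause.Sat, toClause2, litAtom, Atom.Sat, FO.Sat]

def Sigma2TwoSat.ofRH (ys : List ℕ) (ψ : List (RHClause σ)) : Sigma2TwoSat σ :=
  ⟨[], ys, ψ.map RHClause.toClause2⟩

theorem Sigma2TwoSat.sat_ofRH_iff {n : ℕ} (A : StrucOn σ n) (v : ℕ → Fin (n + 1))
    (V : SOAssign n) (ys : List ℕ) (ψ : List (RHClause σ)) :
    (ofRH ys ψ).Sat A v V ↔
      ∀ u : ℕ → Fin (n + 1), (∀ z, z ∉ ys → u z = v z) → ∀ c ∈ ψ, c.Sat A u V := by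
  simp [Sigma2TwoSat.Sat, ofRH, ← funext_iff, RHClause.sat_toClause2]

end Translation

section Variants

variable {n : ℕ}

def foVariants (xs : List ℕ) (v : ℕ → Fin (n + 1)) : Set (ℕ → Fin (n + 1)) :=
  {v' | ∀ z, z ∉ xs → v' z = v z}

def soVariants (L : List (ℕ × ℕ)) (V : SOAssign n) : Set (SOAssign n) :=
  {V' | ∀ Y k, (Y, k) ∉ L → V' Y k = V Y k}

@[simp]
theorem foVariants_nil (v : ℕ → Fin (n + 1)) : foVariants [] v = {v} := by
  ext v'
  simp [foVariants, ← funext_iff]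

@[simp]
theorem soVariants_nil (V : SOAssign n) : soVariants [] V = {V} := by
  ext V'
  simp only [soVariants, List.not_mem_nil, not_false_eq_true, forall_const,
    Set.mem_ofPred_eq, Set.mem_singleton_iff]
  exact ⟨fun h => funext fun Y => funext (h Y), fun h => by simp [h]⟩

theorem foVariants_cons (x : ℕ) (xs : List ℕ) (v : ℕ → Fin (n + 1)) :
    foVariants (x :: xs) v = ⋃ a, foVariants xs (Function.update v x a) := by
  ext v'
  simp only [foVariants, Set.mem_iUnion, Set.mem_ofPred_eq, List.mem_cons, not_or]
  constructor
  · intro h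
    refine ⟨v' x, fun z hz => ?_⟩
    by_cases hzx : z = x
    · subst hzx
      simp
    · simp [h z ⟨hzx, hz⟩, hzx]
  · rintro ⟨a, h⟩ z ⟨hzx, hz⟩
    simp [h z hz, hzx]

theorem updSO_self (V : SOAssign n) (X k : ℕ) (B : (Fin k → Fin (n + 1)) → Prop) :
    updSO V X k B X k = B := by
  simp [updSO]

theorem updSO_of_ne (V : SOAssign n) {X k Y k' : ℕ} (h : (Y, k') ≠ (X, k))
    (B : (Fin k → Fin (n + 1)) → Prop) : updSO V X k B Y k' = V Y k' := by
  simp_all [updSO]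

theorem soVariants_cons (X k : ℕ) (L : List (ℕ × ℕ)) (V : SOAssign n) :
    soVariants ((X, k) :: L) V =
      ⋃ B : Finset (Fin k → Fin (n + 1)), soVariants L (updSO V X k (· ∈ B)) := by
  classical
  ext V'
  simp only [soVariants, Set.mem_iUnion, Set.mem_ofPred_eq, List.mem_cons, not_or]
  constructor
  · intro h
    refine ⟨Finset.univ.filter (V' X k ·), fun Y k' hY => ?_⟩
    by_cases hYX : (Y, k') = (X, k)
    · obtain ⟨rfl, rfl⟩ := Prod.mk.inj hYX
      ext t
      simp [updSO_self]
    · rw [updSO_of_ne V hYX, h Y k' ⟨hYX, hY⟩]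
  · rintro ⟨B, h⟩ Y k' ⟨hYX, hY⟩
    rw [h Y k' hY, updSO_of_ne V hYX]

theorem foVariants_finite (xs : List ℕ) (v : ℕ → Fin (n + 1)) : (foVariants xs v).Finite := by
  induction xs generalizing v with
  | nil => simp
  | cons x xs ih =>
    rw [foVariants_cons]
    exact Set.finite_iUnion fun a => ih _

theorem soVariants_finite (L : List (ℕ × ℕ)) (V : SOAssign n) : (soVariants L V).Finite := by
  induction L generalizing V with
  | nil => simp
  | cons q L ih =>
    rw [soVariants_cons]
    exact Set.finite_iUnion fun B => ih _

end Variants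

namespace QSO

open scoped Function

variable {σ : Vocab}

def sumFOs (xs : List ℕ) (β : QSO σ) : QSO σ :=
  xs.foldr sumFO β

def sumSOs (L : List (ℕ × ℕ)) (β : QSO σ) : QSO σ :=
  L.foldr (fun q => sumSO q.1 q.2) β

variable {n : ℕ} (A : StrucOn σ n) (β : QSO σ)

theorem eval_sumFOs {xs : List ℕ} (hxs : xs.Nodup) (v : ℕ → Fin (n + 1)) (V : SOAssign n) :
    eval A (sumFOs xs β) v V = ∑ᶠ v' ∈ foVariants xs v, eval A β v' V := by
  induction xs generalizing v with
  | nil => simp [sumFOs]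
  | cons x xs ih =>
    obtain ⟨hx, hxs⟩ := List.nodup_cons.mp hxs
    have hdisj : Pairwise (Disjoint on fun a => foVariants xs (Function.update v x a)) := by
      intro a b hab
      refine Set.disjoint_left.mpr fun v' ha hb => hab ?_
      rw [← Function.update_self x a v, ← ha x hx, hb x hx, Function.update_self]
    rw [foVariants_cons, finsum_mem_iUnion hdisj fun a => foVariants_finite _ _,
      finsum_eq_sum_of_fintype]
    exact Finset.sum_congr rfl fun a _ => ih hxs _

theorem eval_sumSOs {L : List (ℕ × ℕ)} (hL : L.Nodup) (v : ℕ → Fin (n + 1)) (V : SOAssign n) :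
    eval A (sumSOs L β) v V = ∑ᶠ V' ∈ soVariants L V, eval A β v V' := by
  induction L generalizing V with
  | nil => simp [sumSOs]
  | cons q L ih =>
    obtain ⟨X, k⟩ := q
    obtain ⟨hq, hL⟩ := List.nodup_cons.mp hL
    have hdisj : Pairwise (Disjoint on fun B : Finset (Fin k → Fin (n + 1)) =>
        soVariants L (updSO V X k (· ∈ B))) := by
      intro B B' hB
      refine Set.disjoint_left.mpr fun V' h h' => hB ?_
      have hXk := (h X k hq).symm.trans (h' X k hq)
      simp only [updSO_self] at hXk
      ext t
      exact iff_of_eq (congrFun hXk t)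
    rw [soVariants_cons, finsum_mem_iUnion hdisj fun B => soVariants_finite _ _,
      finsum_eq_sum_of_fintype]
    exact Finset.sum_congr rfl fun B _ => ih hL _

end QSO

theorem ncard_eq_finsum_mem_finsum_mem_boole {α β : Type*} {S : Set α} {T : Set β}
    (hS : S.Finite) (hT : T.Finite) (P : α → β → Prop) [∀ a b, Decidable (P a b)] :
    {p : α × β | p.1 ∈ S ∧ p.2 ∈ T ∧ P p.1 p.2}.ncard =
      ∑ᶠ a ∈ S, ∑ᶠ b ∈ T, if P a b then 1 else 0 := by
  have hset : {p : α × β | p.1 ∈ S ∧ p.2 ∈ T ∧ P p.1 p.2} =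
      ↑((hS.toFinset ×ˢ hT.toFinset).filter fun p => P p.1 p.2) := by
    ext
    simp [and_assoc]
  rw [hset, Set.ncard_coe_finset, Finset.card_filter, Finset.sum_product,
    finsum_mem_eq_finite_toFinset_sum _ hS]
  exact Finset.sum_congr rfl fun a _ => (finsum_mem_eq_finite_toFinset_sum _ hT).symm

theorem qsoVal_sumSOs_sumFOs_form {σ : Vocab} {n : ℕ} {Xs : List (ℕ × ℕ)} {xs : List ℕ}
    (hXs : Xs.Nodup) (hxs : xs.Nodup) (η : Sigma2TwoSat σ) (A : StrucOn σ n) :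
    qsoVal (.sumSOs Xs (.sumFOs xs (.form η))) A =
      {p : SOAssign n × (ℕ → Fin (n + 1)) | p.1 ∈ soVariants Xs (fun _ _ _ => False) ∧
        p.2 ∈ foVariants xs (fun _ => 0) ∧ η.Sat A p.2 p.1}.ncard := by
  classical
  refine (QSO.eval_sumSOs A _ hXs _ _).trans ?_
  simp only [QSO.eval_sumFOs _ _ hxs, QSO.eval]
  exact (ncard_eq_finsum_mem_finsum_mem_boole (soVariants_finite _ _)
    (foVariants_finite _ _) _).symm

/-- Every counting function in the class `#RHΠ₁` belongs to the class
`ΣQSO(Σ₂-2SAT)`, i.e. `#RHΠ₁ ⊆ ΣQSO(Σ₂-2SAT)`. -/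
theorem RHPi1_subset_SigmaQSO_Sigma2TwoSat (σ : Vocab) (F : ∀ n : ℕ, StrucOn σ n → ℕ)
    (hF : RHPi1 F) :
    ∃ α : QSO σ, ∀ (n : ℕ) (A : StrucOn σ n), F n A = qsoVal α A := by
  obtain ⟨Xs, xs, ys, ψ, hF⟩ := hF
  refine ⟨.sumSOs Xs.dedup (.sumFOs xs.dedup (.form (.ofRH ys ψ))), fun n A => ?_⟩
  rw [hF n A, qsoVal_sumSOs_sumFOs_form Xs.nodup_dedup xs.nodup_dedup]
  congr 1
  ext
  simp [soVariants, foVariants, funext_iff, Sigma2TwoSat.sat_ofRH_iff]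
end

section
/- The counting problem #Disj2SAT belongs to the class ΣQSO(Σ2-2SAT): there is a relational vocabulary σ encoding disjunctions of 2SAT formulae and a ΣQSO(Σ2-2SAT) sentence α over σ such that for every disjunction-of-2SAT formula φ encoded by a σ-structure A, the number of satisfying assignments of φ equals [[α]](A). -/
/-! ## Disjunctions of 2SAT formulae and #Disj2SAT -/

/-- A propositional literal: a sign (`true` = positive) and a variable. -/
abbrev PLit : Type := Bool × ℕ

/-- A disjunction of CNF formulae: a list of disjuncts, each a list of clauses,
each a list of literals. -/
abbrev D2S : Type := List (List (List PLit))

/-- Every clause of every disjunct has at most two literals, i.e. the formula is a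
disjunction of 2SAT formulae. -/
def IsDisj2Sat (φ : D2S) : Prop := ∀ ψ ∈ φ, ∀ c ∈ ψ, c.length ≤ 2

/-- Evaluation of a literal under a truth assignment. -/
def evalLit (τ : ℕ → Bool) (l : PLit) : Bool := if l.1 then τ l.2 else ! τ l.2

/-- Evaluation of a clause (disjunction of literals). -/
def evalClause (τ : ℕ → Bool) (c : List PLit) : Bool := c.any (evalLit τ)

/-- Evaluation of a CNF (conjunction of clauses). -/
def evalCNF (τ : ℕ → Bool) (ψ : List (List PLit)) : Bool := ψ.all (evalClause τ)

/-- Evaluation of a disjunction of CNFs. -/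
def evalD2S (τ : ℕ → Bool) (φ : D2S) : Bool := φ.any (evalCNF τ)

/-- The set of propositional variables occurring in the formula. -/
def varsD2S (φ : D2S) : Finset ℕ := ((φ.flatten.flatten).map Prod.snd).toFinset

/-- `#Disj2SAT`: the number of satisfying assignments (to the occurring variables)
of a disjunction of 2SAT formulae. -/
def countSat (φ : D2S) : ℕ :=
  ((varsD2S φ).powerset.filter (fun s => evalD2S (fun v => decide (v ∈ s)) φ = true)).card

/-! ## Encoding a disjunction of 2SAT formulae as a finite ordered structure -/

/-- Number of disjuncts. -/
def numDisj (φ : D2S) : ℕ := φ.length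

/-- Total number of clauses. -/
def numCl (φ : D2S) : ℕ := (φ.map List.length).sum

/-- The largest variable index mentioned (0 if none). -/
def maxVar (φ : D2S) : ℕ := ((φ.flatten.flatten).map Prod.snd).foldr max 0

/-- The universe element representing clause `j` of disjunct `i`. -/
def clOffset (φ : D2S) (i j : ℕ) : ℕ := φ.length + ((φ.take i).map List.length).sum + j

/-- The universe element representing propositional variable `v`. -/
def varIdx (φ : D2S) (v : ℕ) : ℕ := numDisj φ + numCl φ + v

/-- Normalize a clause with at most two literals into pairs of literals:
a two-literal clause is kept, a one-literal clause `l` becomes `l ∨ l`, and the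
empty (unsatisfiable) clause becomes the contradictory pair `x₀ ∨ x₀`, `¬x₀ ∨ ¬x₀`. -/
def clause2 (c : List PLit) : List (PLit × PLit) :=
  match c with
  | [] => [((true, 0), (true, 0)), ((false, 0), (false, 0))]
  | [l] => [(l, l)]
  | l1 :: l2 :: _ => [(l1, l2)]

/-- The kind of a two-literal clause: `0` for `x ∨ y`, `1` for `¬x ∨ y`,
`2` for `x ∨ ¬y`, `3` for `¬x ∨ ¬y` (the relations `C₁,…,C₄`). -/
def typeIdx (b1 b2 : Bool) : ℕ :=
  match b1, b2 with
  | true, true => 0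
  | false, true => 1
  | true, false => 2
  | false, false => 3

/-- All clauses of the formula, together with their disjunct index and their
universe element. -/
def clausesIndexed (φ : D2S) : List (ℕ × ℕ × List PLit) :=
  (List.range φ.length).flatMap fun i =>
    (List.range ((φ.getD i []).length)).map fun j =>
      (i, clOffset φ i j, (φ.getD i []).getD j [])

/-- The relations of the structure encoding `φ`: relations `0,…,3` are `C₁,…,C₄`
(`Cₜ(c,x,y)` holds iff clause `c` is a two-literal clause of kind `t` on the
variables `x`, `y`), relation `4` is `D` (`D(d,c)` holds iff clause `c` occurs in
disjunct `d`), relation `5` marks the disjunct elements and relation `6` marks the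
variable elements of the universe. -/
def relD2S (φ : D2S) (i : ℕ) (a : ℕ → ℕ) : Bool :=
  if i < 4 then
    (clausesIndexed φ).any fun e => (clause2 e.2.2).any fun pr =>
      (typeIdx pr.1.1 pr.2.1 == i) && (a 0 == e.2.1) &&
      (a 1 == varIdx φ pr.1.2) && (a 2 == varIdx φ pr.2.2)
  else if i = 4 then
    (clausesIndexed φ).any fun e => (a 0 == e.1) && (a 1 == e.2.1)
  else if i = 5 then decide (a 0 < numDisj φ)
  else decide (numDisj φ + numCl φ ≤ a 0)

/-- The vocabulary for disjunctions of 2SAT formulae: four ternary relations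
`C₁,…,C₄`, one binary relation `D`, and two unary sort markers. -/
def sigmaD2S : Vocab :=
  ⟨7, fun i => if (i : ℕ) < 4 then 3 else if (i : ℕ) = 4 then 2 else 1⟩

/-- The size parameter of the encoding: the universe `Fin (usize φ + 1)` consists of
an element for every disjunct, every clause, and every variable `v ≤ maxVar φ`. -/
def usizeD2S (φ : D2S) : ℕ := numDisj φ + numCl φ + maxVar φ

/-- The finite ordered `sigmaD2S`-structure encoding the formula `φ`. -/
def encD2S (φ : D2S) : StrucOn sigmaD2S (usizeD2S φ) :=
  ⟨fun i args =>
    relD2S φ (i : ℕ) (fun k => if h : k < sigmaD2S.ar i then (args ⟨k, h⟩ : ℕ) else 0)⟩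

section Aux
open Classical

/-- The `Fin` element of the universe corresponding to variable `v`. -/
def vfin (φ : D2S) (v : ℕ) : Fin (usizeD2S φ + 1) :=
  ⟨varIdx φ v % (usizeD2S φ + 1), Nat.mod_lt _ (Nat.succ_pos _)⟩

lemma le_foldr_max {l : List ℕ} {v : ℕ} (h : v ∈ l) : v ≤ l.foldr max 0 := by
  induction l with
  | nil => simp at h
  | cons a t ih =>
    rcases List.mem_cons.1 h with rfl | h
    · exact le_max_left _ _
    · exact le_trans (ih h) (le_max_right _ _)

lemma var_le_maxVar {φ : D2S} {v : ℕ} (h : v ∈ varsD2S φ) : v ≤ maxVar φ := by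
  unfold varsD2S at h
  rw [List.mem_toFinset] at h
  exact le_foldr_max h

lemma vfin_val {φ : D2S} {v : ℕ} (h : v ≤ maxVar φ) : (vfin φ v : ℕ) = varIdx φ v := by
  have hlt : varIdx φ v < usizeD2S φ + 1 := by
    unfold varIdx usizeD2S; omega
  simp [vfin, Nat.mod_eq_of_lt hlt]

lemma vfin_inj {φ : D2S} {v v' : ℕ} (h : v ≤ maxVar φ) (h' : v' ≤ maxVar φ)
    (e : vfin φ v = vfin φ v') : v = v' := by
  have := congrArg Fin.val e
  rw [vfin_val h, vfin_val h'] at this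
  unfold varIdx at this; omega

lemma mem_clausesIndexed {φ : D2S} {e : ℕ × ℕ × List PLit} :
    e ∈ clausesIndexed φ ↔ ∃ i, i < φ.length ∧ ∃ j, j < (φ.getD i []).length ∧
      e = (i, clOffset φ i j, (φ.getD i []).getD j []) := by
  simp only [clausesIndexed, List.mem_flatMap, List.mem_map, List.mem_range]
  constructor
  · rintro ⟨i, hi, j, hj, h⟩; exact ⟨i, hi, j, hj, h.symm⟩
  · rintro ⟨i, hi, j, hj, h⟩; exact ⟨i, hi, j, hj, h.symm⟩

lemma sum_take_mono {L : List ℕ} {a b : ℕ} (h : a ≤ b) : (L.take a).sum ≤ (L.take b).sum := by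
  have heq : L.take b = L.take a ++ (L.drop a).take (b - a) := by
    rw [← List.take_add]; congr 1; omega
  rw [heq, List.sum_append]; omega

lemma sum_take_succ_eq {φ : D2S} {i : ℕ} (hi : i < φ.length) :
    ((φ.take (i+1)).map List.length).sum
      = ((φ.take i).map List.length).sum + (φ.getD i []).length := by
  rw [List.map_take, List.map_take,
    List.sum_take_succ (φ.map List.length) i (by simpa using hi)]
  congr 1
  rw [List.getElem_map, List.getD_eq_getElem _ _ hi]

lemma clOffset_strict {φ : D2S} {i j i' j' : ℕ} (h : i < i') (hi : i < φ.length)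
    (hj : j < (φ.getD i []).length) :
    clOffset φ i j < clOffset φ i' j' := by
  unfold clOffset
  have h1 := sum_take_succ_eq hi
  have h2 : ((φ.take (i+1)).map List.length).sum ≤ ((φ.take i').map List.length).sum := by
    rw [List.map_take, List.map_take]; exact sum_take_mono h
  omega

lemma clOffset_inj {φ : D2S} {i j i' j' : ℕ}
    (hi : i < φ.length) (hj : j < (φ.getD i []).length)
    (hi' : i' < φ.length) (hj' : j' < (φ.getD i' []).length)
    (h : clOffset φ i j = clOffset φ i' j') : i = i' ∧ j = j' := by
  rcases lt_trichotomy i i' with hlt | rfl | hlt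
  · exact absurd h (Nat.ne_of_lt (clOffset_strict hlt hi hj))
  · refine ⟨rfl, ?_⟩
    unfold clOffset at h; omega
  · exact absurd h.symm (Nat.ne_of_lt (clOffset_strict hlt hi' hj'))

lemma clausesIndexed_inj {φ : D2S} {e e' : ℕ × ℕ × List PLit}
    (he : e ∈ clausesIndexed φ) (he' : e' ∈ clausesIndexed φ)
    (h : e.2.1 = e'.2.1) : e = e' := by
  rw [mem_clausesIndexed] at he he'
  obtain ⟨i, hi, j, hj, rfl⟩ := he
  obtain ⟨i', hi', j', hj', rfl⟩ := he'
  obtain ⟨rfl, rfl⟩ := clOffset_inj hi hj hi' hj' h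
  rfl

lemma clOffset_lt {φ : D2S} {i j : ℕ} (hi : i < φ.length) (hj : j < (φ.getD i []).length) :
    clOffset φ i j < numDisj φ + numCl φ := by
  have h1 := sum_take_succ_eq hi
  have h2 : ((φ.take (i+1)).map List.length).sum ≤ (φ.map List.length).sum := by
    have := sum_take_mono (L := φ.map List.length) (a := i+1) (b := (φ.map List.length).length)
      (by simp; omega)
    rw [List.take_length] at this
    rw [List.map_take]; exact this
  unfold clOffset numDisj numCl; omega

lemma CI_snd_lt {φ : D2S} {e : ℕ × ℕ × List PLit} (he : e ∈ clausesIndexed φ) :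
    e.2.1 < numDisj φ + numCl φ := by
  rw [mem_clausesIndexed] at he
  obtain ⟨i, hi, j, hj, rfl⟩ := he
  exact clOffset_lt hi hj

lemma clause_mem_of_CI {φ : D2S} {e : ℕ × ℕ × List PLit} (he : e ∈ clausesIndexed φ) :
    e.2.2 ∈ φ.flatten := by
  rw [mem_clausesIndexed] at he
  obtain ⟨i, hi, j, hj, rfl⟩ := he
  rw [List.mem_flatten]
  refine ⟨φ.getD i [], ?_, ?_⟩
  · rw [List.getD_eq_getElem _ _ hi]; exact List.getElem_mem _
  · rw [List.getD_eq_getElem _ _ hj]; exact List.getElem_mem _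

lemma lit_var_mem {φ : D2S} {c : List PLit} (hc : c ∈ φ.flatten) {l : PLit} (hl : l ∈ c) :
    l.2 ∈ varsD2S φ := by
  unfold varsD2S
  rw [List.mem_toFinset, List.mem_map]
  exact ⟨l, List.mem_flatten.2 ⟨c, hc, hl⟩, rfl⟩

lemma clause2_mem {c : List PLit} (hne : c ≠ []) {pr : PLit × PLit} (hpr : pr ∈ clause2 c) :
    pr.1 ∈ c ∧ pr.2 ∈ c := by
  match c with
  | [] => exact absurd rfl hne
  | [l] =>
    simp [clause2] at hpr
    subst hpr; simp
  | l1 :: l2 :: r =>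
    simp [clause2] at hpr
    subst hpr; simp

lemma clause2_var_le {φ : D2S} {e : ℕ × ℕ × List PLit} (he : e ∈ clausesIndexed φ)
    {pr : PLit × PLit} (hpr : pr ∈ clause2 e.2.2) :
    pr.1.2 ≤ maxVar φ ∧ pr.2.2 ≤ maxVar φ := by
  rcases eq_or_ne e.2.2 [] with hc | hc
  · rw [hc] at hpr
    simp [clause2] at hpr
    rcases hpr with h | h <;> subst h <;> exact ⟨Nat.zero_le _, Nat.zero_le _⟩
  · obtain ⟨h1, h2⟩ := clause2_mem hc hpr
    have hm := clause_mem_of_CI he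
    exact ⟨var_le_maxVar (lit_var_mem hm h1), var_le_maxVar (lit_var_mem hm h2)⟩

lemma clause2_covers {c : List PLit} (hlen : c.length ≤ 2) {l : PLit} (hl : l ∈ c) :
    ∃ pr ∈ clause2 c, pr.1 = l ∨ pr.2 = l := by
  match c with
  | [] => cases hl
  | [a] =>
    simp at hl; subst hl
    exact ⟨(l, l), by simp [clause2], Or.inl rfl⟩
  | [a, b] =>
    refine ⟨(a, b), by simp [clause2], ?_⟩
    rcases List.mem_pair.1 hl with rfl | rfl
    · exact Or.inl rfl
    · exact Or.inr rfl
  | _ :: _ :: _ :: _ => simp at hlen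

lemma typeIdx_lt4 (b1 b2 : Bool) : typeIdx b1 b2 < 4 := by
  cases b1 <;> cases b2 <;> simp [typeIdx]

lemma typeIdx_inj {b1 b2 c1 c2 : Bool} (h : typeIdx b1 b2 = typeIdx c1 c2) :
    b1 = c1 ∧ b2 = c2 := by
  cases b1 <;> cases b2 <;> cases c1 <;> cases c2 <;> simp_all [typeIdx]

end Aux
section Aux2
open Classical

/-- Conjunction of FO formulae. -/
def fand {σ : Vocab} (p q : FO σ) : FO σ := .not (.or (.not p) (.not q))

lemma sat_fand {σ : Vocab} {n : ℕ} {A : StrucOn σ n} {v : ℕ → Fin (n+1)} {p q : FO σ} :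
    FO.Sat A v (fand p q) ↔ FO.Sat A v p ∧ FO.Sat A v q := by
  simp [fand, FO.Sat]

def foC (t : ℕ) (h7 : t < 7) (x y z : ℕ) : FO sigmaD2S :=
  .rel ⟨t, h7⟩ (fun j => [x, y, z].getD (j : ℕ) 0)

def foD (x y : ℕ) : FO sigmaD2S := .rel ⟨4, by norm_num [sigmaD2S]⟩ (fun j => [x, y].getD (j : ℕ) 0)

def foDisj (x : ℕ) : FO sigmaD2S := .rel ⟨5, by norm_num [sigmaD2S]⟩ (fun _ => x)

lemma relD2S_lt4 {φ : D2S} {t : ℕ} (ht : t < 4) (a : ℕ → ℕ) :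
    relD2S φ t a = true ↔ ∃ e ∈ clausesIndexed φ, ∃ pr ∈ clause2 e.2.2,
      typeIdx pr.1.1 pr.2.1 = t ∧ a 0 = e.2.1 ∧
      a 1 = varIdx φ pr.1.2 ∧ a 2 = varIdx φ pr.2.2 := by
  unfold relD2S
  rw [if_pos ht]
  simp only [List.any_eq_true, Bool.and_eq_true, beq_iff_eq]
  tauto

lemma relD2S_4 {φ : D2S} (a : ℕ → ℕ) :
    relD2S φ 4 a = true ↔ ∃ e ∈ clausesIndexed φ, a 0 = e.1 ∧ a 1 = e.2.1 := by
  unfold relD2S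
  rw [if_neg (by norm_num), if_pos rfl]
  simp only [List.any_eq_true, Bool.and_eq_true, beq_iff_eq]

lemma relD2S_5 {φ : D2S} (a : ℕ → ℕ) :
    relD2S φ 5 a = true ↔ a 0 < numDisj φ := by
  unfold relD2S
  rw [if_neg (by norm_num), if_neg (by norm_num), if_pos rfl]
  exact decide_eq_true_iff

lemma sat_foC {φ : D2S} {v : ℕ → Fin (usizeD2S φ + 1)} {t : ℕ} (ht : t < 4) (h7 : t < 7)
    (x y z : ℕ) :
    FO.Sat (encD2S φ) v (foC t h7 x y z) ↔
      ∃ e ∈ clausesIndexed φ, ∃ pr ∈ clause2 e.2.2,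
        typeIdx pr.1.1 pr.2.1 = t ∧ (v x : ℕ) = e.2.1 ∧
        (v y : ℕ) = varIdx φ pr.1.2 ∧ (v z : ℕ) = varIdx φ pr.2.2 := by
  have har : sigmaD2S.ar ⟨t, h7⟩ = 3 := by
    show (if t < 4 then 3 else if t = 4 then 2 else 1) = 3
    rw [if_pos ht]
  simp only [foC, FO.Sat, encD2S]
  rw [relD2S_lt4 ht]
  have h0 : (0:ℕ) < sigmaD2S.ar ⟨t, h7⟩ := by omega
  have h1 : (1:ℕ) < sigmaD2S.ar ⟨t, h7⟩ := by omega
  have h2 : (2:ℕ) < sigmaD2S.ar ⟨t, h7⟩ := by omega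
  rw [dif_pos h0, dif_pos h1, dif_pos h2]
  rfl

lemma sat_foD {φ : D2S} {v : ℕ → Fin (usizeD2S φ + 1)} (x y : ℕ) :
    FO.Sat (encD2S φ) v (foD x y) ↔
      ∃ e ∈ clausesIndexed φ, (v x : ℕ) = e.1 ∧ (v y : ℕ) = e.2.1 := by
  have har : sigmaD2S.ar ⟨(4:ℕ), by norm_num [sigmaD2S]⟩ = 2 := by
    show (if (4:ℕ) < 4 then 3 else if (4:ℕ) = 4 then 2 else 1) = 2
    norm_num
  simp only [foD, FO.Sat, encD2S]
  rw [relD2S_4]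
  have h0 : (0:ℕ) < sigmaD2S.ar ⟨4, by norm_num [sigmaD2S]⟩ := by omega
  have h1 : (1:ℕ) < sigmaD2S.ar ⟨4, by norm_num [sigmaD2S]⟩ := by omega
  rw [dif_pos h0, dif_pos h1]
  rfl

lemma sat_foDisj {φ : D2S} {v : ℕ → Fin (usizeD2S φ + 1)} (x : ℕ) :
    FO.Sat (encD2S φ) v (foDisj x) ↔ (v x : ℕ) < numDisj φ := by
  have har : sigmaD2S.ar ⟨(5:ℕ), by norm_num [sigmaD2S]⟩ = 1 := by
    show (if (5:ℕ) < 4 then 3 else if (5:ℕ) = 4 then 2 else 1) = 1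
    norm_num
  simp only [foDisj, FO.Sat, encD2S]
  rw [relD2S_5]
  have h0 : (0:ℕ) < sigmaD2S.ar ⟨5, by norm_num [sigmaD2S]⟩ := by omega
  rw [dif_pos h0]

end Aux2
section Aux3
open Classical

lemma sat_or {σ : Vocab} {n : ℕ} {A : StrucOn σ n} {v : ℕ → Fin (n+1)} {p q : FO σ} :
    FO.Sat A v (.or p q) ↔ FO.Sat A v p ∨ FO.Sat A v q := Iff.rfl

lemma sat_not {σ : Vocab} {n : ℕ} {A : StrucOn σ n} {v : ℕ → Fin (n+1)} {p : FO σ} :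
    FO.Sat A v (.not p) ↔ ¬ FO.Sat A v p := Iff.rfl

lemma sat_ex {σ : Vocab} {n : ℕ} {A : StrucOn σ n} {v : ℕ → Fin (n+1)} {x : ℕ} {p : FO σ} :
    FO.Sat A v (.ex x p) ↔ ∃ a : Fin (n+1), FO.Sat A (Function.update v x a) p := Iff.rfl

def foCany (x y z : ℕ) : FO sigmaD2S :=
  ((foC 0 (by norm_num) x y z).or (foC 1 (by norm_num) x y z)).or
    ((foC 2 (by norm_num) x y z).or (foC 3 (by norm_num) x y z))

lemma sat_foCany {φ : D2S} {v : ℕ → Fin (usizeD2S φ + 1)} (x y z : ℕ) :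
    FO.Sat (encD2S φ) v (foCany x y z) ↔
      ∃ e ∈ clausesIndexed φ, ∃ pr ∈ clause2 e.2.2,
        (v x : ℕ) = e.2.1 ∧ (v y : ℕ) = varIdx φ pr.1.2 ∧ (v z : ℕ) = varIdx φ pr.2.2 := by
  unfold foCany
  rw [sat_or, sat_or, sat_or,
    sat_foC (by norm_num) (by norm_num), sat_foC (by norm_num) (by norm_num),
    sat_foC (by norm_num) (by norm_num), sat_foC (by norm_num) (by norm_num)]
  constructor
  · rintro ((h | h) | (h | h)) <;>
      · obtain ⟨e, he, pr, hpr, _, h1, h2, h3⟩ := h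
        exact ⟨e, he, pr, hpr, h1, h2, h3⟩
  · rintro ⟨e, he, pr, hpr, h1, h2, h3⟩
    have h4 := typeIdx_lt4 pr.1.1 pr.2.1
    set tt := typeIdx pr.1.1 pr.2.1 with htt
    interval_cases tt
    · exact Or.inl (Or.inl ⟨e, he, pr, hpr, htt.symm, h1, h2, h3⟩)
    · exact Or.inl (Or.inr ⟨e, he, pr, hpr, htt.symm, h1, h2, h3⟩)
    · exact Or.inr (Or.inl ⟨e, he, pr, hpr, htt.symm, h1, h2, h3⟩)
    · exact Or.inr (Or.inr ⟨e, he, pr, hpr, htt.symm, h1, h2, h3⟩)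

def foEmpty (c : ℕ) : FO sigmaD2S :=
  .ex 106 (fand (foC 0 (by norm_num) c 106 106) (foC 3 (by norm_num) c 106 106))

lemma sat_foEmpty {φ : D2S} {u : ℕ → Fin (usizeD2S φ + 1)} {c' : ℕ} (hc : c' ≠ 106) :
    FO.Sat (encD2S φ) u (foEmpty c') ↔
      ∃ e ∈ clausesIndexed φ, (u c' : ℕ) = e.2.1 ∧ e.2.2 = [] := by
  unfold foEmpty
  rw [sat_ex]
  constructor
  · rintro ⟨wv, hsat⟩
    rw [sat_fand, sat_foC (by norm_num) (by norm_num), sat_foC (by norm_num) (by norm_num)] at hsat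
    simp only [Function.update_apply, if_neg hc, if_pos rfl] at hsat
    obtain ⟨⟨e, he, pr, hpr, ht0, hv0, _, _⟩, ⟨e', he', pr', hpr', ht3, hv3, _, _⟩⟩ := hsat
    have hee : e = e' := clausesIndexed_inj he he' (hv0.symm.trans hv3)
    subst hee
    obtain ⟨hp1, _⟩ := typeIdx_inj (show typeIdx pr.1.1 pr.2.1 = typeIdx true true from ht0)
    obtain ⟨hp1', _⟩ := typeIdx_inj (show typeIdx pr'.1.1 pr'.2.1 = typeIdx false false from ht3)
    obtain ⟨e1, e2, c⟩ := e
    rcases c with _ | ⟨l, _ | ⟨l2, r⟩⟩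
    · exact ⟨(e1, e2, []), he, hv0, rfl⟩
    · simp [clause2] at hpr hpr'
      subst hpr; subst hpr'
      rw [hp1] at hp1'; cases hp1'
    · simp [clause2] at hpr hpr'
      subst hpr; subst hpr'
      rw [hp1] at hp1'; cases hp1'
  · rintro ⟨e, he, hval, hemp⟩
    refine ⟨vfin φ 0, ?_⟩
    rw [sat_fand, sat_foC (by norm_num) (by norm_num), sat_foC (by norm_num) (by norm_num)]
    simp only [Function.update_apply, if_neg hc, if_pos rfl]
    have hv0 : (vfin φ 0 : ℕ) = varIdx φ 0 := vfin_val (Nat.zero_le _)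
    constructor
    · refine ⟨e, he, ((true, 0), (true, 0)), ?_, rfl, hval, hv0, hv0⟩
      rw [hemp]; simp [clause2]
    · refine ⟨e, he, ((false, 0), (false, 0)), ?_, rfl, hval, hv0, hv0⟩
      rw [hemp]; simp [clause2]

/-- `a` is the universe element of a variable occurring in `φ`. -/
def OccP (φ : D2S) (a : Fin (usizeD2S φ + 1)) : Prop :=
  ∃ w ∈ varsD2S φ, (a : ℕ) = varIdx φ w

def foOcc (z : ℕ) : FO sigmaD2S :=
  .ex 104 (.ex 105 (fand (.not (foEmpty 104))
    ((foCany 104 z 105).or (foCany 104 105 z))))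

lemma numDC_le {φ : D2S} : numDisj φ + numCl φ ≤ usizeD2S φ := by
  unfold usizeD2S; omega

lemma sat_foOcc {φ : D2S} (hφ : IsDisj2Sat φ) {u : ℕ → Fin (usizeD2S φ + 1)} :
    FO.Sat (encD2S φ) u (foOcc 102) ↔ OccP φ (u 102) := by
  unfold foOcc
  rw [sat_ex]
  constructor
  · rintro ⟨xb, hsat⟩
    rw [sat_ex] at hsat
    obtain ⟨yb, hsat⟩ := hsat
    rw [sat_fand, sat_not, sat_foEmpty (by norm_num), sat_or, sat_foCany, sat_foCany] at hsat
    simp only [Function.update_apply, reduceIte] at hsat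
    obtain ⟨hne, hor⟩ := hsat
    -- extract a clause entry with u 102 among its variables
    have key : ∃ e ∈ clausesIndexed φ, ∃ pr ∈ clause2 e.2.2,
        (xb : ℕ) = e.2.1 ∧ ((u 102 : ℕ) = varIdx φ pr.1.2 ∨ (u 102 : ℕ) = varIdx φ pr.2.2) := by
      rcases hor with ⟨e, he, pr, hpr, h1, h2, h3⟩ | ⟨e, he, pr, hpr, h1, h2, h3⟩
      · exact ⟨e, he, pr, hpr, h1, Or.inl h2⟩
      · exact ⟨e, he, pr, hpr, h1, Or.inr h3⟩
    obtain ⟨e, he, pr, hpr, hxb, hu⟩ := key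
    have hnemp : e.2.2 ≠ [] := by
      intro h
      exact hne ⟨e, he, hxb, h⟩
    obtain ⟨hm1, hm2⟩ := clause2_mem hnemp hpr
    have hcf := clause_mem_of_CI he
    rcases hu with hu | hu
    · exact ⟨pr.1.2, lit_var_mem hcf hm1, hu⟩
    · exact ⟨pr.2.2, lit_var_mem hcf hm2, hu⟩
  · rintro ⟨w, hw, hval⟩
    -- find an actual literal occurrence of w
    have hw' := hw
    unfold varsD2S at hw'
    rw [List.mem_toFinset, List.mem_map] at hw'
    obtain ⟨l, hl, hlw⟩ := hw'
    rw [List.mem_flatten] at hl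
    obtain ⟨c, hcf, hlc⟩ := hl
    have hcf' := hcf
    rw [List.mem_flatten] at hcf'
    obtain ⟨ψ', hψ, hcψ⟩ := hcf'
    obtain ⟨i, hi, hφi⟩ := List.mem_iff_getElem.1 hψ
    obtain ⟨j, hj, hcj⟩ := List.mem_iff_getElem.1 hcψ
    have hgd : φ.getD i [] = ψ' := by rw [List.getD_eq_getElem _ _ hi, hφi]
    have hj' : j < (φ.getD i []).length := by rw [hgd]; exact hj
    have he : (i, clOffset φ i j, c) ∈ clausesIndexed φ := by
      rw [mem_clausesIndexed]
      refine ⟨i, hi, j, hj', ?_⟩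
      rw [hgd, List.getD_eq_getElem _ _ hj, hcj]
    have hlen : c.length ≤ 2 := hφ ψ' hψ c hcψ
    obtain ⟨pr, hpr, hside⟩ := clause2_covers hlen hlc
    have hco : clOffset φ i j < usizeD2S φ + 1 := by
      have := clOffset_lt hi hj'
      have := numDC_le (φ := φ)
      omega
    have hvle := clause2_var_le he hpr
    refine ⟨⟨clOffset φ i j, hco⟩, ?_⟩
    rw [sat_ex]
    rcases hside with hside | hside
    · refine ⟨vfin φ pr.2.2, ?_⟩
      rw [sat_fand, sat_not, sat_foEmpty (by norm_num), sat_or, sat_foCany, sat_foCany]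
      simp only [Function.update_apply, reduceIte]
      constructor
      · rintro ⟨e', he', h1, h2⟩
        have he'' : e' = (i, clOffset φ i j, c) := clausesIndexed_inj he' he h1.symm
        rw [he''] at h2
        simp only at h2
        rw [h2] at hlc
        cases hlc
      · exact Or.inl ⟨(i, clOffset φ i j, c), he, pr, hpr, rfl,
          (by rw [hval, ← hlw, hside] : (u 102 : ℕ) = varIdx φ pr.1.2), vfin_val hvle.2⟩
    · refine ⟨vfin φ pr.1.2, ?_⟩
      rw [sat_fand, sat_not, sat_foEmpty (by norm_num), sat_or, sat_foCany, sat_foCany]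
      simp only [Function.update_apply, reduceIte]
      constructor
      · rintro ⟨e', he', h1, h2⟩
        have he'' : e' = (i, clOffset φ i j, c) := clausesIndexed_inj he' he h1.symm
        rw [he''] at h2
        simp only at h2
        rw [h2] at hlc
        cases hlc
      · exact Or.inr ⟨(i, clOffset φ i j, c), he, pr, hpr, rfl, vfin_val hvle.1,
          (by rw [hval, ← hlw, hside] : (u 102 : ℕ) = varIdx φ pr.2.2)⟩

end Aux3
section Aux4
open Classical

/-- The second-order assignment interpreting `X` (name 0, arity 1) as `B`. -/
def VB (φ : D2S) (B : Finset (Fin 1 → Fin (usizeD2S φ + 1))) : SOAssign (usizeD2S φ) :=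
  updSO (fun _ _ _ => False) 0 1 (fun t => t ∈ B)

def memB {φ : D2S} (B : Finset (Fin 1 → Fin (usizeD2S φ + 1)))
    (a : Fin (usizeD2S φ + 1)) : Prop :=
  (fun _ : Fin 1 => a) ∈ B

lemma VB_apply {φ : D2S} {B : Finset (Fin 1 → Fin (usizeD2S φ + 1))}
    (g : Fin 1 → Fin (usizeD2S φ + 1)) : VB φ B 0 1 g ↔ g ∈ B := by
  unfold VB updSO
  rw [dif_pos (⟨rfl, rfl⟩ : (0:ℕ) = 0 ∧ (1:ℕ) = 1)]
  have hg : (fun j => g (Fin.cast (⟨rfl, rfl⟩ : (0:ℕ) = 0 ∧ (1:ℕ) = 1).2.symm j)) = g := by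
    funext j; exact congrArg g (Fin.ext rfl)
  rw [hg]

def bcond (b : Bool) (P : Prop) : Prop := if b then P else ¬ P

lemma sat_foAtom {σ : Vocab} {n : ℕ} {A : StrucOn σ n} {v : ℕ → Fin (n+1)}
    {V : SOAssign n} {f : FO σ} : Atom.Sat A v V (.fo f) ↔ FO.Sat A v f := Iff.rfl

lemma sat_lit {φ : D2S} {B : Finset (Fin 1 → Fin (usizeD2S φ + 1))}
    {u : ℕ → Fin (usizeD2S φ + 1)} (pos : Bool) (x : ℕ) :
    Atom.Sat (encD2S φ) u (VB φ B) (.lit pos 0 1 (fun _ => x)) ↔ bcond pos (memB B (u x)) := by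
  cases pos
  · show (¬ VB φ B 0 1 (fun j => u ((fun _ : Fin 1 => x) j))) ↔ bcond false (memB B (u x))
    exact not_congr (VB_apply _)
  · show (VB φ B 0 1 (fun j => u ((fun _ : Fin 1 => x) j))) ↔ bcond true (memB B (u x))
    exact VB_apply _

def clDisj : Clause2 sigmaD2S := ⟨.fo (foDisj 100), .fo .bot, .fo .bot, Or.inl trivial⟩

def clGuard (b1 b2 : Bool) : Clause2 sigmaD2S :=
  ⟨.fo (.not (fand (foD 100 101)
      (foC (typeIdx b1 b2) (by have := typeIdx_lt4 b1 b2; omega) 101 102 103))),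
   .lit b1 0 1 (fun _ => 102), .lit b2 0 1 (fun _ => 103), Or.inl trivial⟩

def clOcc : Clause2 sigmaD2S :=
  ⟨.lit false 0 1 (fun _ => 102), .fo (foOcc 102), .fo .bot, Or.inr (Or.inl trivial)⟩

def psiD2S : Sigma2TwoSat sigmaD2S :=
  ⟨[100], [101, 102, 103],
   [clDisj, clGuard true true, clGuard false true, clGuard true false, clGuard false false,
    clOcc]⟩

lemma sat_clDisj {φ : D2S} {B} {u : ℕ → Fin (usizeD2S φ + 1)} :
    Clause2.Sat (encD2S φ) u (VB φ B) clDisj ↔ (u 100 : ℕ) < numDisj φ := by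
  simp only [Clause2.Sat, clDisj, sat_foAtom]
  rw [sat_foDisj]
  simp [FO.Sat]

lemma sat_clGuard {φ : D2S} {B} {u : ℕ → Fin (usizeD2S φ + 1)} (b1 b2 : Bool) :
    Clause2.Sat (encD2S φ) u (VB φ B) (clGuard b1 b2) ↔
      (¬ ((∃ e ∈ clausesIndexed φ, (u 100 : ℕ) = e.1 ∧ (u 101 : ℕ) = e.2.1) ∧
          (∃ e ∈ clausesIndexed φ, ∃ pr ∈ clause2 e.2.2,
            typeIdx pr.1.1 pr.2.1 = typeIdx b1 b2 ∧ (u 101 : ℕ) = e.2.1 ∧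
            (u 102 : ℕ) = varIdx φ pr.1.2 ∧ (u 103 : ℕ) = varIdx φ pr.2.2)) ∨
       (bcond b1 (memB B (u 102)) ∨ bcond b2 (memB B (u 103)))) := by
  simp only [Clause2.Sat, clGuard, sat_foAtom]
  rw [sat_not, sat_fand, sat_foD, sat_foC (typeIdx_lt4 b1 b2), sat_lit, sat_lit]

lemma sat_clOcc {φ : D2S} (hφ : IsDisj2Sat φ) {B} {u : ℕ → Fin (usizeD2S φ + 1)} :
    Clause2.Sat (encD2S φ) u (VB φ B) clOcc ↔
      (¬ memB B (u 102) ∨ OccP φ (u 102)) := by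
  simp only [Clause2.Sat, clOcc, sat_foAtom]
  rw [sat_lit, sat_foOcc hφ]
  show bcond false _ ∨ _ ∨ False ↔ _
  simp [bcond]

/-- A literal is satisfied by the assignment encoded by `B`. -/
def LitSat (φ : D2S) (B : Finset (Fin 1 → Fin (usizeD2S φ + 1))) (l : PLit) : Prop :=
  bcond l.1 (memB B (vfin φ l.2))

/-- All clauses of disjunct `a` are satisfied. -/
def Guards (φ : D2S) (B : Finset (Fin 1 → Fin (usizeD2S φ + 1)))
    (a : Fin (usizeD2S φ + 1)) : Prop :=
  ∀ e ∈ clausesIndexed φ, e.1 = (a : ℕ) → ∀ pr ∈ clause2 e.2.2,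
    LitSat φ B pr.1 ∨ LitSat φ B pr.2

lemma psi_sat_iff {φ : D2S} (hφ : IsDisj2Sat φ) (B : Finset (Fin 1 → Fin (usizeD2S φ + 1))) :
    Sigma2TwoSat.Sat (encD2S φ) (fun _ => 0) (VB φ B) psiD2S ↔
      ((∀ x, memB B x → OccP φ x) ∧
       ∃ a : Fin (usizeD2S φ + 1), (a : ℕ) < numDisj φ ∧ Guards φ B a) := by
  unfold Sigma2TwoSat.Sat
  constructor
  · rintro ⟨w, hw, hu⟩
    constructor
    · intro x hx
      set u' := Function.update w 102 x with hu'
      have hag : ∀ z, z ∉ psiD2S.allVars → u' z = w z := by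
        intro z hz
        have hz2 : z ≠ 102 := by
          intro h; subst h; exact hz (by simp [psiD2S])
        simp [hu', Function.update_apply, hz2]
      have hc := hu u' hag clOcc (by simp [psiD2S])
      rw [sat_clOcc hφ] at hc
      have h102 : u' 102 = x := by simp [hu']
      rw [h102] at hc
      rcases hc with hc | hc
      · exact absurd hx hc
      · exact hc
    · refine ⟨w 100, ?_, ?_⟩
      · have hc := hu w (fun z _ => rfl) clDisj (by simp [psiD2S])
        rw [sat_clDisj] at hc; exact hc
      · intro e he he1 pr hpr
        have hvle := clause2_var_le he hpr
        have hco : e.2.1 < usizeD2S φ + 1 := by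
          have h1 := CI_snd_lt he
          have h2 := numDC_le (φ := φ)
          omega
        set u' := Function.update (Function.update (Function.update w 101 ⟨e.2.1, hco⟩)
          102 (vfin φ pr.1.2)) 103 (vfin φ pr.2.2) with hu'
        have hag : ∀ z, z ∉ psiD2S.allVars → u' z = w z := by
          intro z hz
          simp only [psiD2S, List.mem_cons, List.not_mem_nil] at hz
          push_neg at hz
          obtain ⟨hz1, hz2, hz3, -⟩ := hz
          simp [hu', Function.update_apply, hz1, hz2, hz3]
        have hc := hu u' hag (clGuard pr.1.1 pr.2.1)
          (by cases hb1 : pr.1.1 <;> cases hb2 : pr.2.1 <;> simp [psiD2S])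
        rw [sat_clGuard] at hc
        have e100 : u' 100 = w 100 := by simp [hu', Function.update_apply]
        have e101 : u' 101 = ⟨e.2.1, hco⟩ := by simp [hu', Function.update_apply]
        have e102 : u' 102 = vfin φ pr.1.2 := by simp [hu', Function.update_apply]
        have e103 : u' 103 = vfin φ pr.2.2 := by simp [hu', Function.update_apply]
        rcases hc with hc | hc
        · exfalso; apply hc
          constructor
          · refine ⟨e, he, ?_, ?_⟩
            · rw [e100]; exact he1.symm
            · rw [e101]
          · refine ⟨e, he, pr, hpr, rfl, ?_, ?_, ?_⟩
            · rw [e101]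
            · rw [e102]; exact vfin_val hvle.1
            · rw [e103]; exact vfin_val hvle.2
        · rw [e102, e103] at hc
          exact hc
  · rintro ⟨hOcc, a, ha, hG⟩
    refine ⟨Function.update (fun _ => 0) 100 a, ?_, ?_⟩
    · intro z hz
      have hz1 : z ≠ 100 := by
        intro h; subst h; exact hz (by simp [psiD2S])
      simp [Function.update_apply, hz1]
    · intro u hagr c hc
      have h100 : u 100 = a := by
        rw [hagr 100 (by simp [psiD2S]), Function.update_self]
      have guardcase : ∀ b1 b2 : Bool, Clause2.Sat (encD2S φ) u (VB φ B) (clGuard b1 b2) := by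
        intro b1 b2
        rw [sat_clGuard]
        by_cases hD : ((∃ e ∈ clausesIndexed φ, (u 100 : ℕ) = e.1 ∧ (u 101 : ℕ) = e.2.1) ∧
          (∃ e ∈ clausesIndexed φ, ∃ pr ∈ clause2 e.2.2,
            typeIdx pr.1.1 pr.2.1 = typeIdx b1 b2 ∧ (u 101 : ℕ) = e.2.1 ∧
            (u 102 : ℕ) = varIdx φ pr.1.2 ∧ (u 103 : ℕ) = varIdx φ pr.2.2))
        case pos =>
          obtain ⟨⟨e', he', ha', hb'⟩, ⟨e, he, pr, hpr, hty, hb, h2, h3⟩⟩ := hD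
          have hee : e' = e := clausesIndexed_inj he' he (hb'.symm.trans hb)
          subst hee
          right
          obtain ⟨h5, h6⟩ := typeIdx_inj hty
          have he1 : e'.1 = (a : ℕ) := by rw [← ha', h100]
          have hres := hG e' he' he1 pr hpr
          have hvle := clause2_var_le he' hpr
          have e102 : u 102 = vfin φ pr.1.2 := Fin.ext (by rw [h2, vfin_val hvle.1])
          have e103 : u 103 = vfin φ pr.2.2 := Fin.ext (by rw [h3, vfin_val hvle.2])
          unfold LitSat at hres
          rw [h5, h6] at hres
          rw [e102, e103]
          exact hres
        case neg => exact Or.inl hD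
      simp only [psiD2S, List.mem_cons, List.not_mem_nil, or_false] at hc
      rcases hc with rfl | rfl | rfl | rfl | rfl | rfl
      · rw [sat_clDisj, h100]; exact ha
      · exact guardcase true true
      · exact guardcase false true
      · exact guardcase true false
      · exact guardcase false false
      · rw [sat_clOcc hφ]
        by_cases h : memB B (u 102)
        · exact Or.inr (hOcc _ h)
        · exact Or.inl h

end Aux4
section Aux5
open Classical

lemma litSat_iff {φ : D2S} {B : Finset (Fin 1 → Fin (usizeD2S φ + 1))} (l : PLit) :
    evalLit (fun v => decide (memB B (vfin φ v))) l = true ↔ LitSat φ B l := by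
  obtain ⟨s, v⟩ := l
  cases s <;> simp [evalLit, LitSat, bcond]

lemma clause_iff {φ : D2S} {B : Finset (Fin 1 → Fin (usizeD2S φ + 1))} {c : List PLit}
    (hlen : c.length ≤ 2) :
    (∀ pr ∈ clause2 c, LitSat φ B pr.1 ∨ LitSat φ B pr.2) ↔
      evalClause (fun v => decide (memB B (vfin φ v))) c = true := by
  match c with
  | [] =>
    simp only [clause2, evalClause, List.any_nil, List.mem_cons, List.not_mem_nil, or_false,
      List.mem_singleton, forall_eq_or_imp, forall_eq]
    simp only [LitSat, bcond]
    constructor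
    · rintro ⟨h1, h2⟩
      simp only [if_pos, if_true, if_false] at h1 h2
      tauto
    · intro h; cases h
  | [l] =>
    simp only [clause2, evalClause, List.any_cons, List.any_nil, Bool.or_false,
      List.mem_singleton, forall_eq]
    rw [litSat_iff]
    tauto
  | [l1, l2] =>
    simp only [clause2, evalClause, List.any_cons, List.any_nil, Bool.or_false,
      List.mem_singleton, forall_eq, Bool.or_eq_true]
    rw [litSat_iff, litSat_iff]
  | _ :: _ :: _ :: _ => simp at hlen

lemma cnf_iff {φ : D2S} (hφ : IsDisj2Sat φ) {B : Finset (Fin 1 → Fin (usizeD2S φ + 1))}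
    {i : ℕ} (hi : i < φ.length) :
    (∀ e ∈ clausesIndexed φ, e.1 = i → ∀ pr ∈ clause2 e.2.2,
        LitSat φ B pr.1 ∨ LitSat φ B pr.2) ↔
      evalCNF (fun v => decide (memB B (vfin φ v))) (φ.getD i []) = true := by
  have hmem : φ.getD i [] ∈ φ := by
    rw [List.getD_eq_getElem _ _ hi]; exact List.getElem_mem _
  unfold evalCNF
  rw [List.all_eq_true]
  constructor
  · intro h c hc
    obtain ⟨j, hj, hcj⟩ := List.mem_iff_getElem.1 hc
    have he : (i, clOffset φ i j, c) ∈ clausesIndexed φ := by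
      rw [mem_clausesIndexed]
      exact ⟨i, hi, j, hj, by rw [List.getD_eq_getElem _ _ hj, hcj]⟩
    have hlen : c.length ≤ 2 := hφ _ hmem c hc
    exact (clause_iff hlen).1 (h _ he rfl)
  · intro h e he he1 pr hpr
    obtain ⟨i', hi', j, hj, rfl⟩ := mem_clausesIndexed.1 he
    have hii : i' = i := he1
    subst hii
    have hc : (φ.getD i' []).getD j [] ∈ φ.getD i' [] := by
      rw [List.getD_eq_getElem _ _ hj]; exact List.getElem_mem _
    have hlen : ((φ.getD i' []).getD j []).length ≤ 2 := hφ _ hmem _ hc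
    exact (clause_iff hlen).2 (h _ hc) pr hpr

lemma d2s_iff {φ : D2S} (hφ : IsDisj2Sat φ) (B : Finset (Fin 1 → Fin (usizeD2S φ + 1))) :
    (∃ a : Fin (usizeD2S φ + 1), (a : ℕ) < numDisj φ ∧ Guards φ B a) ↔
      evalD2S (fun v => decide (memB B (vfin φ v))) φ = true := by
  unfold evalD2S
  rw [List.any_eq_true]
  constructor
  · rintro ⟨a, ha, hG⟩
    refine ⟨φ.getD (a : ℕ) [], ?_, ?_⟩
    · rw [List.getD_eq_getElem _ _ ha]; exact List.getElem_mem _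
    · exact (cnf_iff hφ ha).1 hG
  · rintro ⟨ψ', hψ, hcnf⟩
    obtain ⟨i, hi, rfl⟩ := List.mem_iff_getElem.1 hψ
    have hia : i < usizeD2S φ + 1 := by
      unfold usizeD2S numDisj; omega
    refine ⟨⟨i, hia⟩, hi, ?_⟩
    apply (cnf_iff hφ hi).2
    rw [List.getD_eq_getElem _ _ hi]
    exact hcnf

lemma evalD2S_congr {φ : D2S} {τ τ' : ℕ → Bool} (h : ∀ v ∈ varsD2S φ, τ v = τ' v) :
    evalD2S τ φ = evalD2S τ' φ := by
  rw [Bool.eq_iff_iff]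
  unfold evalD2S evalCNF evalClause
  simp only [List.any_eq_true, List.all_eq_true]
  have key : ∀ ψ' ∈ φ, ∀ c ∈ ψ', ∀ l ∈ c, evalLit τ l = evalLit τ' l := by
    intro ψ' hψ c hc l hl
    have : l.2 ∈ varsD2S φ :=
      lit_var_mem (List.mem_flatten.2 ⟨ψ', hψ, hc⟩) hl
    unfold evalLit
    rw [h _ this]
  constructor
  · rintro ⟨ψ', hψ, hcnf⟩
    refine ⟨ψ', hψ, fun c hc => ?_⟩
    obtain ⟨l, hl, he⟩ := hcnf c hc
    exact ⟨l, hl, by rw [← key ψ' hψ c hc l hl]; exact he⟩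
  · rintro ⟨ψ', hψ, hcnf⟩
    refine ⟨ψ', hψ, fun c hc => ?_⟩
    obtain ⟨l, hl, he⟩ := hcnf c hc
    exact ⟨l, hl, by rw [key ψ' hψ c hc l hl]; exact he⟩

lemma sat_char {φ : D2S} (hφ : IsDisj2Sat φ) (B : Finset (Fin 1 → Fin (usizeD2S φ + 1))) :
    Sigma2TwoSat.Sat (encD2S φ) (fun _ => 0) (VB φ B) psiD2S ↔
      ((∀ x, memB B x → OccP φ x) ∧
       evalD2S (fun v => decide (memB B (vfin φ v))) φ = true) := by
  rw [psi_sat_iff hφ]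
  exact and_congr_right fun _ => d2s_iff hφ B

end Aux5
/-- `#Disj2SAT` belongs to `ΣQSO(Σ₂-2SAT)`: there is a
`ΣQSO(Σ₂-2SAT)` sentence `α` over the vocabulary `sigmaD2S` (which encodes
disjunctions of 2SAT formulae) such that for every disjunction-of-2SAT formula `φ`,
encoded by the `sigmaD2S`-structure `encD2S φ`, the number of satisfying assignments
of `φ` equals `[[α]](encD2S φ)`. -/
theorem disj2sat_mem_SigmaQSO_Sigma2TwoSat :
    ∃ α : QSO sigmaD2S, ∀ φ : D2S, IsDisj2Sat φ → qsoVal α (encD2S φ) = countSat φ := by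
  classical
  refine ⟨.sumSO 0 1 (.form psiD2S), ?_⟩
  intro φ hφ
  have hL : qsoVal (QSO.sumSO 0 1 (.form psiD2S)) (encD2S φ)
      = (Finset.univ.filter fun B : Finset (Fin 1 → Fin (usizeD2S φ + 1)) =>
          Sigma2TwoSat.Sat (encD2S φ) (fun _ => 0) (VB φ B) psiD2S).card := by
    rw [Finset.card_filter]
    rfl
  rw [hL]
  unfold countSat
  apply Finset.card_bij'
    (i := fun B _ => (varsD2S φ).filter (fun v => (fun _ : Fin 1 => vfin φ v) ∈ B))
    (j := fun s _ => s.image (fun v => (fun _ : Fin 1 => vfin φ v)))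
  -- i maps into the target
  · intro B hB
    obtain ⟨hOcc, heval⟩ := (sat_char hφ B).1 ((Finset.mem_filter.1 hB).2)
    rw [Finset.mem_filter]
    refine ⟨Finset.mem_powerset.2 (Finset.filter_subset _ _), ?_⟩
    have hcg : evalD2S (fun v => decide
        (v ∈ (varsD2S φ).filter (fun v => (fun _ : Fin 1 => vfin φ v) ∈ B))) φ
        = evalD2S (fun v => decide (memB B (vfin φ v))) φ := by
      apply evalD2S_congr
      intro v hv
      rw [decide_eq_decide]
      simp [Finset.mem_filter, hv, memB]
    rw [hcg]
    exact heval
  -- j maps into the source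
  · intro s hs
    obtain ⟨hsub', hP⟩ := Finset.mem_filter.1 hs
    have hsub : s ⊆ varsD2S φ := Finset.mem_powerset.1 hsub'
    rw [Finset.mem_filter]
    refine ⟨Finset.mem_univ _, (sat_char hφ _).2 ⟨?_, ?_⟩⟩
    · intro x hx
      obtain ⟨v, hv, heq⟩ := Finset.mem_image.1 hx
      have hxv : vfin φ v = x := congrFun heq 0
      exact ⟨v, hsub hv, by rw [← hxv]; exact vfin_val (var_le_maxVar (hsub hv))⟩
    · have hcg : evalD2S (fun v => decide
          (memB (s.image (fun v => (fun _ : Fin 1 => vfin φ v))) (vfin φ v))) φ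
          = evalD2S (fun v => decide (v ∈ s)) φ := by
        apply evalD2S_congr
        intro v hv
        rw [decide_eq_decide]
        unfold memB
        rw [Finset.mem_image]
        constructor
        · rintro ⟨v', hv', heq⟩
          have hvv : vfin φ v' = vfin φ v := congrFun heq 0
          rwa [vfin_inj (var_le_maxVar (hsub hv')) (var_le_maxVar hv) hvv] at hv'
        · intro hv'
          exact ⟨v, hv', rfl⟩
      rw [hcg]
      exact hP
  -- left inverse
  · intro B hB
    obtain ⟨hOcc, -⟩ := (sat_char hφ B).1 ((Finset.mem_filter.1 hB).2)
    ext f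
    simp only [Finset.mem_image, Finset.mem_filter]
    constructor
    · rintro ⟨v, ⟨hv, hmem⟩, rfl⟩
      exact hmem
    · intro hf
      have hconst : (fun _ : Fin 1 => f 0) = f := by
        funext j; exact congrArg f (Subsingleton.elim 0 j)
      have hm : memB B (f 0) := by unfold memB; rw [hconst]; exact hf
      obtain ⟨w, hw, hwv⟩ := hOcc _ hm
      have hfw : vfin φ w = f 0 := Fin.ext (by rw [vfin_val (var_le_maxVar hw), ← hwv])
      refine ⟨w, ⟨hw, ?_⟩, ?_⟩
      · rw [hfw]
        exact hm
      · rw [hfw]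
        exact hconst
  -- right inverse
  · intro s hs
    have hsub : s ⊆ varsD2S φ := Finset.mem_powerset.1 (Finset.mem_filter.1 hs).1
    ext v
    simp only [Finset.mem_filter, Finset.mem_image]
    constructor
    · rintro ⟨hv, v', hv', heq⟩
      have hvv : vfin φ v' = vfin φ v := congrFun heq 0
      rwa [vfin_inj (var_le_maxVar (hsub hv')) (var_le_maxVar hv) hvv] at hv'
    · intro hv
      exact ⟨hsub hv, v, hv, rfl⟩
end
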